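/- arXiv:1510.01188 — 2 statements merged into one kernel-verified Lean document; each statement's English description precedes it below -/
import Mathlib

section
/- For all real numbers a > 0, c > 0, and any real b, the integral ∫₀^∞ u^{c-1} exp(-a u² - b u) du equals (1/2) a^{-c/2} [ Γ(c/2) · ₁F₁(c/2; 1/2; b²/(4a)) − (b/√a) Γ((c+1)/2) · ₁F₁((c+1)/2; 3/2; b²/(4a)) ]. -/
open MeasureTheory Real Set

/-- Pochhammer symbol (rising factorial) `(x)_m`. -/
noncomputable def poch (x : ℝ) (m : ℕ) : ℝ := (ascPochhammer ℝ m).eval x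

/-- Confluent hypergeometric function `₁F₁(a; c; z)`. -/
noncomputable def oneF1 (a c z : ℝ) : ℝ :=
  ∑' m : ℕ, poch a m / (poch c m * (m.factorial : ℝ)) * z ^ m

/-- Gauss hypergeometric function `₂F₁(a, b; c; z)`. -/
noncomputable def twoF1 (a b c z : ℝ) : ℝ :=
  ∑' m : ℕ, poch a m * poch b m / (poch c m * (m.factorial : ℝ)) * z ^ m

/-- Generalized hypergeometric function `₃F₂(a₁, a₂, a₃; b₁, b₂; z)`. -/
noncomputable def threeF2 (a₁ a₂ a₃ b₁ b₂ z : ℝ) : ℝ :=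
  ∑' m : ℕ, poch a₁ m * poch a₂ m * poch a₃ m /
      (poch b₁ m * poch b₂ m * (m.factorial : ℝ)) * z ^ m

/-- Beta function `B(u,v) = Γ(u)Γ(v)/Γ(u+v)`. -/
noncomputable def betaFn (u v : ℝ) : ℝ := Real.Gamma u * Real.Gamma v / Real.Gamma (u + v)

/-- `W_{γ,δ}(n)`, the ratio of Gamma functions from the paper. -/
noncomputable def Wgd (γ δ : ℝ) (n : ℕ) : ℝ :=
  (Real.Gamma (((n : ℝ) - γ) / 2) * Real.Gamma (((n : ℝ) - δ) / 2)) /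
    (Real.Gamma (((n : ℝ) - γ - 1) / 2) * Real.Gamma (((n : ℝ) - δ - 1) / 2))

-- Auxiliary lemmas
lemma poch_zero (x : ℝ) : poch x 0 = 1 := by simp [poch]
lemma poch_succ (x : ℝ) (m : ℕ) : poch x (m + 1) = poch x m * (x + m) := by
  simp [poch, ascPochhammer_succ_eval]
lemma poch_pos {x : ℝ} (hx : 0 < x) (m : ℕ) : 0 < poch x m := by
  induction m with
  | zero => simp [poch_zero]
  | succ m ih => rw [poch_succ]; exact mul_pos ih (by positivity)
lemma Gamma_poch {x : ℝ} (hx : 0 < x) (m : ℕ) :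
    Real.Gamma (x + m) = Real.Gamma x * poch x m := by
  induction m with
  | zero => simp [poch_zero]
  | succ m ih =>
      have hx' : x + m ≠ 0 := by positivity
      have h2 : x + ((m : ℕ) + 1 : ℕ) = (x + m) + 1 := by push_cast; ring
      rw [h2, Real.Gamma_add_one hx', ih, poch_succ]; ring
lemma fact_even (m : ℕ) :
    ((2 * m).factorial : ℝ) = 4 ^ m * m.factorial * poch (1/2) m := by
  induction m with
  | zero => simp [poch_zero]
  | succ m ih =>
      have h : 2 * (m + 1) = (2 * m + 1) + 1 := by ring
      rw [h, Nat.factorial_succ, Nat.factorial_succ, poch_succ]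
      push_cast [ih, Nat.factorial_succ]
      ring
lemma fact_odd (m : ℕ) :
    ((2 * m + 1).factorial : ℝ) = 4 ^ m * m.factorial * poch (3/2) m := by
  induction m with
  | zero => simp [poch_zero]
  | succ m ih =>
      have h : 2 * (m + 1) + 1 = ((2 * m + 1) + 1) + 1 := by ring
      rw [h, Nat.factorial_succ, Nat.factorial_succ, poch_succ]
      push_cast [Nat.factorial_succ m]
      rw [ih]; ring

lemma poch_le {p q : ℝ} (hp : 0 < p) (hq : 0 < q) (m : ℕ) :
    poch p m ≤ (max (p / q) 1) ^ m * poch q m := by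
  set M := max (p / q) 1 with hM
  have hM1 : 1 ≤ M := le_max_right _ _
  have hM0 : 0 ≤ M := le_trans zero_le_one hM1
  have hMq : p ≤ M * q := by
    rw [hM]
    calc p = (p / q) * q := by field_simp
    _ ≤ max (p / q) 1 * q := by
        exact mul_le_mul_of_nonneg_right (le_max_left _ _) hq.le
  induction m with
  | zero => simp [poch_zero]
  | succ m ih =>
      rw [poch_succ, poch_succ]
      have h1 : p + m ≤ M * (q + m) := by
        have : (m : ℝ) ≤ M * m := le_mul_of_one_le_left (Nat.cast_nonneg m) hM1
        nlinarith
      calc poch p m * (p + m) ≤ (M ^ m * poch q m) * (M * (q + m)) := by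
            exact mul_le_mul ih h1 (by positivity)
              (mul_nonneg (pow_nonneg hM0 m) (poch_pos hq m).le)
      _ = M ^ (m + 1) * (poch q m * (q + m)) := by ring

lemma summable_hyper {p q : ℝ} (hp : 0 < p) (hq : 0 < q) (z : ℝ) :
    Summable (fun m : ℕ => poch p m / (poch q m * m.factorial) * z ^ m) := by
  set M := max (p / q) 1 with hM
  have hM0 : 0 ≤ M := le_trans zero_le_one (le_max_right _ _)
  refine Summable.of_norm_bounded
    (Real.summable_pow_div_factorial (M * |z|)) (fun m => ?_)
  have hqm := poch_pos hq m
  have hfm : (0:ℝ) < m.factorial := by positivity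
  have h1 : ‖poch p m / (poch q m * m.factorial) * z ^ m‖
      = (poch p m / poch q m) * (|z| ^ m / m.factorial) := by
    rw [norm_mul, norm_div, Real.norm_eq_abs, Real.norm_eq_abs, Real.norm_eq_abs,
      abs_of_pos (poch_pos hp m), abs_of_pos (mul_pos hqm hfm), abs_pow]
    field_simp
  rw [h1]
  show _ ≤ (M * |z|) ^ m / (m.factorial : ℝ)
  rw [mul_pow, mul_div_assoc]
  apply mul_le_mul_of_nonneg_right _ (by positivity)
  rw [div_le_iff₀ hqm]
  exact poch_le hp hq m

lemma gauss_int {a s : ℝ} (ha : 0 < a) (hs : 0 < s) :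
    ∫ u in Ioi (0:ℝ), u ^ (s - 1) * Real.exp (-a * u ^ 2) =
      (1/2) * a ^ (-(s/2)) * Real.Gamma (s/2) := by
  have h := integral_rpow_mul_exp_neg_mul_rpow (p := 2) (q := s - 1)
    two_pos (by linarith : (-1:ℝ) < s - 1) ha
  simp_rw [rpow_two] at h
  rw [h, show s - 1 + 1 = s from by ring, show -s/2 = -(s/2) from by ring]
  ring

/-- Lemma 1 (Bateman project): for `a, c > 0` and any real `b`,
`∫₀^∞ u^{c-1} exp(-a u² - b u) du
  = ½ a^{-c/2} [Γ(c/2) ₁F₁(c/2; 1/2; b²/(4a)) - (b/√a) Γ((c+1)/2) ₁F₁((c+1)/2; 3/2; b²/(4a))]`. -/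
theorem bateman_integral (a b c : ℝ) (ha : 0 < a) (hc : 0 < c) :
    ∫ u in Ioi (0 : ℝ), u ^ (c - 1) * Real.exp (-a * u ^ 2 - b * u) =
      (1 / 2) * a ^ (-(c / 2)) *
        (Real.Gamma (c / 2) * oneF1 (c / 2) (1 / 2) (b ^ 2 / (4 * a)) -
          (b / Real.sqrt a) * Real.Gamma ((c + 1) / 2) *
            oneF1 ((c + 1) / 2) (3 / 2) (b ^ 2 / (4 * a))) := by
  have hsa : (0:ℝ) < Real.sqrt a := Real.sqrt_pos.mpr ha
  have hc2 : (0:ℝ) < c / 2 := by linarith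
  have hc12 : (0:ℝ) < (c + 1) / 2 := by linarith
  set z : ℝ := b ^ 2 / (4 * a) with hzdef
  have hz0 : (0:ℝ) ≤ z := by rw [hzdef]; positivity
  set F : ℕ → ℝ → ℝ :=
    fun n u => ((-b) ^ n / n.factorial) * (u ^ (c - 1 + n) * Real.exp (-a * u ^ 2)) with hF
  set g : ℕ → ℝ := fun n =>
    ((-b) ^ n / n.factorial) *
      ((1/2) * a ^ (-((c + n)/2)) * Real.Gamma ((c + n)/2)) with hg
  have hintF : ∀ n : ℕ, IntegrableOn (F n) (Ioi (0:ℝ)) := by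
    intro n
    rw [hF]
    exact (integrableOn_rpow_mul_exp_neg_mul_sq ha
      (by have : (0:ℝ) ≤ n := Nat.cast_nonneg n; linarith)).const_mul _
  have hInt : ∀ n : ℕ, ∫ u in Ioi (0:ℝ), F n u = g n := by
    intro n
    rw [hF, hg]
    simp only []
    rw [integral_const_mul _ _,
      show c - 1 + (n:ℝ) = (c + n) - 1 from by ring, gauss_int ha (by positivity)]
  have hΓpos : ∀ n : ℕ, 0 < Real.Gamma ((c + n)/2) :=
    fun n => Real.Gamma_pos_of_pos (by positivity)
  have habs : ∀ n : ℕ, ‖g n‖ =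
      (|b| ^ n / n.factorial) * ((1/2) * a ^ (-((c + n)/2)) * Real.Gamma ((c + n)/2)) := by
    intro n
    rw [hg]
    simp only []
    rw [norm_mul, norm_div, norm_pow, Real.norm_eq_abs, abs_neg, Real.norm_eq_abs,
      Nat.abs_cast, Real.norm_eq_abs,
      abs_of_pos (mul_pos (mul_pos one_half_pos (rpow_pos_of_pos ha _)) (hΓpos n))]
  have hNorm : ∀ n : ℕ, (∫ u in Ioi (0:ℝ), ‖F n u‖) = ‖g n‖ := by
    intro n
    rw [habs n]
    have hcong : EqOn (fun u => ‖F n u‖)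
        (fun u => (|b| ^ n / n.factorial) * (u ^ (c - 1 + n) * Real.exp (-a * u ^ 2)))
        (Ioi (0:ℝ)) := by
      intro u hu
      have hu' : (0:ℝ) < u := hu
      rw [hF]
      simp only []
      rw [norm_mul, norm_div, norm_pow, Real.norm_eq_abs, abs_neg, Real.norm_eq_abs,
        Nat.abs_cast, Real.norm_eq_abs,
        abs_of_pos (mul_pos (rpow_pos_of_pos hu' _) (Real.exp_pos _))]
    rw [setIntegral_congr_fun measurableSet_Ioi hcong, integral_const_mul _ _,
      show c - 1 + (n:ℝ) = (c + n) - 1 from by ring, gauss_int ha (by positivity)]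
  -- even/odd closed forms
  have heven : ∀ m : ℕ, g (2 * m) = ((1/2) * a ^ (-(c/2)) * Real.Gamma (c/2)) *
      (poch (c/2) m / (poch (1/2) m * m.factorial) * z ^ m) := by
    intro m
    rw [hg]
    simp only []
    rw [show (c + ((2*m : ℕ):ℝ))/2 = c/2 + (m:ℕ) from by push_cast; ring,
      Gamma_poch hc2 m,
      show -(c/2 + ((m:ℕ):ℝ)) = -(c/2) + -((m:ℕ):ℝ) from by ring,
      Real.rpow_add ha,
      show a ^ (-((m:ℕ):ℝ)) = ((a:ℝ) ^ m)⁻¹ from by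
        rw [Real.rpow_neg ha.le, Real.rpow_natCast],
      pow_mul, neg_sq, fact_even m, hzdef, div_pow, mul_pow]
    have h1 : poch (1/2) m ≠ 0 := (poch_pos one_half_pos m).ne'
    have h2 : ((m.factorial : ℕ) : ℝ) ≠ 0 := by positivity
    have h3 : (a:ℝ) ^ m ≠ 0 := by positivity
    field_simp
  have hodd : ∀ m : ℕ, g (2 * m + 1) =
      -((1/2) * a ^ (-(c/2)) * (b / Real.sqrt a) * Real.Gamma ((c+1)/2)) *
      (poch ((c+1)/2) m / (poch (3/2) m * m.factorial) * z ^ m) := by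
    intro m
    rw [hg]
    simp only []
    rw [show (c + ((2*m+1 : ℕ):ℝ))/2 = (c+1)/2 + (m:ℕ) from by push_cast; ring,
      Gamma_poch hc12 m,
      show -((c+1)/2 + ((m:ℕ):ℝ)) = (-(c/2) + -(1/2:ℝ)) + -((m:ℕ):ℝ) from by ring,
      Real.rpow_add ha, Real.rpow_add ha,
      show a ^ (-((m:ℕ):ℝ)) = ((a:ℝ) ^ m)⁻¹ from by
        rw [Real.rpow_neg ha.le, Real.rpow_natCast],
      show a ^ (-(1/2:ℝ)) = (Real.sqrt a)⁻¹ from by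
        rw [Real.rpow_neg ha.le, Real.sqrt_eq_rpow],
      pow_succ, pow_mul, neg_sq, fact_odd m, hzdef, div_pow, mul_pow]
    have h1 : poch (3/2) m ≠ 0 := (poch_pos (by norm_num) m).ne'
    have h2 : ((m.factorial : ℕ) : ℝ) ≠ 0 := by positivity
    have h3 : (a:ℝ) ^ m ≠ 0 := by positivity
    field_simp
  -- summability
  have hS1 : Summable (fun m : ℕ => poch (c/2) m / (poch (1/2) m * m.factorial) * z ^ m) :=
    summable_hyper hc2 one_half_pos z
  have hS2 : Summable (fun m : ℕ => poch ((c+1)/2) m / (poch (3/2) m * m.factorial) * z ^ m) :=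
    summable_hyper hc12 (by norm_num) z
  have hge : Summable (fun m : ℕ => g (2*m)) := by
    simp only [heven]; exact hS1.mul_left _
  have hgo : Summable (fun m : ℕ => g (2*m+1)) := by
    simp only [hodd]; exact hS2.mul_left _
  have htermpos1 : ∀ m : ℕ, 0 ≤ poch (c/2) m / (poch (1/2) m * m.factorial) * z ^ m := by
    intro m
    exact mul_nonneg (div_nonneg (poch_pos hc2 m).le
      (mul_nonneg (poch_pos one_half_pos m).le (Nat.cast_nonneg _))) (pow_nonneg hz0 m)
  have htermpos2 : ∀ m : ℕ, 0 ≤ poch ((c+1)/2) m / (poch (3/2) m * m.factorial) * z ^ m := by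
    intro m
    exact mul_nonneg (div_nonneg (poch_pos hc12 m).le
      (mul_nonneg (poch_pos (by norm_num) m).le (Nat.cast_nonneg _))) (pow_nonneg hz0 m)
  have hnormsum : Summable (fun n : ℕ => ‖g n‖) := by
    apply Summable.even_add_odd
    · apply Summable.congr hge
      intro m
      rw [Real.norm_eq_abs, abs_of_nonneg]
      rw [heven m]
      exact mul_nonneg (by positivity) (htermpos1 m)
    · apply Summable.congr (hS2.mul_left
        ((1/2) * a ^ (-(c/2)) * (|b| / Real.sqrt a) * Real.Gamma ((c+1)/2)))
      intro m
      rw [hodd m, Real.norm_eq_abs, abs_mul, abs_neg, abs_of_nonneg (htermpos2 m),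
        abs_mul, abs_mul, abs_div, abs_of_pos (by positivity : (0:ℝ) < (1/2) * a ^ (-(c/2))),
        abs_of_pos hsa, abs_of_pos (Real.Gamma_pos_of_pos hc12)]
  -- swap integral and sum
  have hsumnormint : Summable (fun n : ℕ => ∫ u in Ioi (0:ℝ), ‖F n u‖) :=
    hnormsum.congr (fun n => (hNorm n).symm)
  have hswap := MeasureTheory.integral_tsum_of_summable_integral_norm hintF hsumnormint
  -- pointwise series
  have hexp : ∀ x : ℝ, (∑' n : ℕ, x ^ n / n.factorial) = Real.exp x := by
    intro x
    rw [Real.exp_eq_exp_ℝ, NormedSpace.exp_eq_tsum_div]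
  have hpt : EqOn (fun u => ∑' n : ℕ, F n u)
      (fun u => u ^ (c-1) * Real.exp (-a * u^2 - b * u)) (Ioi (0:ℝ)) := by
    intro u hu
    have hu' : (0:ℝ) < u := hu
    simp only []
    have h1 : ∀ n : ℕ, F n u =
        (u ^ (c-1) * Real.exp (-a * u^2)) * ((-(b*u)) ^ n / n.factorial) := by
      intro n
      rw [hF]
      simp only []
      rw [Real.rpow_add hu', Real.rpow_natCast,
        show -(b*u) = (-b)*u from by ring, mul_pow]
      ring
    rw [tsum_congr h1, tsum_mul_left, hexp,
      show -a * u^2 - b * u = -a * u^2 + -(b*u) from by ring, Real.exp_add]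
    ring
  calc ∫ u in Ioi (0:ℝ), u ^ (c - 1) * Real.exp (-a * u ^ 2 - b * u)
      = ∫ u in Ioi (0:ℝ), ∑' n : ℕ, F n u :=
        (setIntegral_congr_fun measurableSet_Ioi hpt).symm
    _ = ∑' n : ℕ, ∫ u in Ioi (0:ℝ), F n u := hswap.symm
    _ = ∑' n : ℕ, g n := tsum_congr hInt
    _ = (∑' m : ℕ, g (2*m)) + ∑' m : ℕ, g (2*m+1) := (tsum_even_add_odd hge hgo).symm
    _ = _ := by
        simp only [heven, hodd, tsum_mul_left, oneF1]
        ring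
end

section
/- (Corollary 2, normalizing constant for β = 0.) Let n ≥ 1 be an integer, let α > 0, γ, δ be real numbers with n > γ + δ − 2α + 1, and let r ∈ (−1,1). Then ∫_{−1}^{1} (1−ρ²)^{(2α+n−γ−δ−3)/2} [ ₂F₁((n−γ−1)/2, (n−δ−1)/2; 1/2; r²ρ²) + 2rρ W_{γ,δ}(n) ₂F₁((n−γ)/2, (n−δ)/2; 3/2; r²ρ²) ] dρ = B( 1/2, α + (n−γ−δ−1)/2 ) · ₂F₁( (n−γ−1)/2, (n−δ−1)/2; α + (n−γ−δ)/2; r² ). -/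
open MeasureTheory Real Set

lemma poch_le_poch {x y : ℝ} (hx : 0 < x) (hxy : x ≤ y) (m : ℕ) : poch x m ≤ poch y m := by
  induction m with
  | zero => simp [poch_zero]
  | succ k ih =>
    rw [poch_succ, poch_succ]
    have h1 : (0:ℝ) < x + k := by positivity
    exact mul_le_mul ih (by linarith) h1.le ((poch_pos (lt_of_lt_of_le hx hxy) k).le)

lemma abs_poch_le (x : ℝ) (m : ℕ) : |poch x m| ≤ poch (|x| + 1) m := by
  induction m with
  | zero => simp [poch_zero]
  | succ k ih =>
    rw [poch_succ, poch_succ, abs_mul]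
    refine mul_le_mul ih ?_ (abs_nonneg _) (poch_pos (by positivity) k).le
    calc |x + (k:ℝ)| ≤ |x| + k := by
          refine (abs_add_le _ _).trans ?_; simp
      _ ≤ |x| + 1 + k := by linarith

lemma betaFn_pos {u v : ℝ} (hu : 0 < u) (hv : 0 < v) : 0 < betaFn u v := by
  unfold betaFn
  have := Real.Gamma_pos_of_pos hu
  have := Real.Gamma_pos_of_pos hv
  have := Real.Gamma_pos_of_pos (by linarith : (0:ℝ) < u + v)
  positivity

lemma betaFn_poch {s : ℝ} (hs : 0 < s) (m : ℕ) :
    betaFn ((m : ℝ) + 1/2) s = betaFn (1/2) s * (poch (1/2) m / poch (1/2 + s) m) := by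
  have h1 : ((m:ℝ) + 1/2) = 1/2 + m := by ring
  have h2 : ((m:ℝ) + 1/2 + s) = (1/2 + s) + m := by ring
  have g1 : Real.Gamma ((m:ℝ) + 1/2) = Real.Gamma (1/2) * poch (1/2) m := by
    rw [h1]; exact Gamma_poch (by norm_num) m
  have g2 : Real.Gamma ((m:ℝ) + 1/2 + s) = Real.Gamma (1/2 + s) * poch (1/2 + s) m := by
    rw [h2]; exact Gamma_poch (by linarith) m
  have hne : Real.Gamma (1/2 + s) ≠ 0 := (Real.Gamma_pos_of_pos (by linarith)).ne'
  have hpne : poch (1/2 + s) m ≠ 0 := (poch_pos (by linarith) m).ne'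
  unfold betaFn
  rw [g1, g2]
  field_simp

/-- Real Beta integral. -/
lemma integral_betaFn {u v : ℝ} (hu : 0 < u) (hv : 0 < v) :
    ∫ x in Ioo (0:ℝ) 1, x ^ (u - 1) * (1 - x) ^ (v - 1) = betaFn u v := by
  have key : Complex.betaIntegral u v =
      ((∫ x in (0:ℝ)..1, x ^ (u - 1) * (1 - x) ^ (v - 1) : ℝ) : ℂ) := by
    rw [Complex.betaIntegral, ← intervalIntegral.integral_ofReal]
    refine intervalIntegral.integral_congr fun x hx => ?_
    rw [uIcc_of_le (by norm_num : (0:ℝ) ≤ 1)] at hx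
    push_cast
    rw [show ((u:ℂ) - 1) = ((u - 1 : ℝ) : ℂ) by push_cast; ring,
      show ((v:ℂ) - 1) = ((v - 1 : ℝ) : ℂ) by push_cast; ring,
      show ((1:ℂ) - x) = ((1 - x : ℝ) : ℂ) by push_cast; ring,
      ← Complex.ofReal_cpow hx.1 (u-1), ← Complex.ofReal_cpow (by linarith [hx.2]) (v-1)]
  have h2 : Complex.Gamma u * Complex.Gamma v
      = Complex.Gamma (u + v) * Complex.betaIntegral u v :=
    Complex.Gamma_mul_Gamma_eq_betaIntegral (by simpa using hu) (by simpa using hv)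
  have huv : Real.Gamma (u + v) ≠ 0 := (Real.Gamma_pos_of_pos (by linarith)).ne'
  have h3 : (betaFn u v : ℂ) = Complex.betaIntegral u v := by
    have : ((u:ℂ) + v) = ((u + v : ℝ) : ℂ) := by push_cast; ring
    rw [this, Complex.Gamma_ofReal, Complex.Gamma_ofReal, Complex.Gamma_ofReal] at h2
    unfold betaFn
    push_cast
    rw [div_eq_iff (by exact_mod_cast huv)]
    linear_combination h2
  rw [key] at h3
  have h4 : betaFn u v = ∫ x in (0:ℝ)..1, x ^ (u - 1) * (1 - x) ^ (v - 1) := by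
    exact_mod_cast h3
  rw [h4, intervalIntegral.integral_of_le (by norm_num : (0:ℝ) ≤ 1),
    ← MeasureTheory.integral_Ioc_eq_integral_Ioo]

lemma integrableOn_beta {u v : ℝ} (hu : 0 < u) (hv : 0 < v) :
    IntegrableOn (fun x : ℝ => x ^ (u - 1) * (1 - x) ^ (v - 1)) (Ioo 0 1) := by
  have h := (Complex.betaIntegral_convergent (u := (u:ℂ)) (v := (v:ℂ)) (by simpa using hu) (by simpa using hv)).1
  have h2 := (h.mono_set Ioo_subset_Ioc_self).re
  refine (integrableOn_congr_fun (fun x hx => ?_) measurableSet_Ioo).mp h2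
  obtain ⟨hx0, hx1⟩ := hx
  rw [show ((u:ℂ) - 1) = ((u - 1 : ℝ) : ℂ) by push_cast; ring,
    show ((1:ℂ) - x) = ((1 - x : ℝ) : ℂ) by push_cast; ring,
    show ((v:ℂ) - 1) = ((v - 1 : ℝ) : ℂ) by push_cast; ring,
    ← Complex.ofReal_cpow hx0.le (u-1), ← Complex.ofReal_cpow (by linarith) (v-1)]
  rw [← Complex.ofReal_mul]; exact Complex.ofReal_re _

lemma sq_image_Ioo : (fun ρ : ℝ => ρ ^ 2) '' Ioo 0 1 = Ioo 0 1 := by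
  ext x
  constructor
  · rintro ⟨ρ, ⟨h0, h1⟩, rfl⟩
    exact ⟨by positivity, pow_lt_one₀ h0.le h1 two_ne_zero⟩
  · rintro ⟨h0, h1⟩
    exact ⟨Real.sqrt x, ⟨Real.sqrt_pos.mpr h0,
      by rw [show (1:ℝ) = Real.sqrt 1 by simp]; exact Real.sqrt_lt_sqrt h0.le h1⟩,
      Real.sq_sqrt h0.le⟩

lemma sq_injOn : InjOn (fun ρ : ℝ => ρ ^ 2) (Ioo 0 1) := by
  intro a ha b hb h
  simp only at h
  nlinarith [ha.1, hb.1]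

lemma sq_hasDeriv : ∀ ρ ∈ Ioo (0:ℝ) 1,
    HasDerivWithinAt (fun ρ : ℝ => ρ ^ 2) (2 * ρ) (Ioo 0 1) ρ := by
  intro ρ _
  simpa using (hasDerivAt_pow 2 ρ).hasDerivWithinAt

lemma smul_eqOn {s : ℝ} (m : ℕ) : EqOn
    (fun ρ : ℝ => |2 * ρ| • ((ρ ^ 2) ^ ((m:ℝ) - 1/2) * (1 - ρ ^ 2) ^ (s - 1)))
    (fun ρ : ℝ => 2 * ((1 - ρ ^ 2) ^ (s - 1) * ρ ^ (2 * m))) (Ioo 0 1) := by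
  intro ρ ⟨h0, h1⟩
  have h2 : (ρ ^ 2 : ℝ) ^ ((m:ℝ) - 1/2) = ρ ^ (2 * (m:ℝ) - 1) := by
    rw [← Real.rpow_natCast ρ 2, ← Real.rpow_mul h0.le]
    norm_num
    ring_nf
  simp only [smul_eq_mul]
  rw [h2, abs_of_pos (by linarith)]
  have h3 : ρ * ρ ^ (2 * (m:ℝ) - 1) = ρ ^ (2 * m : ℕ) := by
    rw [← Real.rpow_natCast ρ (2*m),
      show ρ * ρ ^ (2*(m:ℝ)-1) = ρ^(1:ℝ) * ρ^(2*(m:ℝ)-1) from by rw [Real.rpow_one],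
      ← Real.rpow_add h0]
    congr 1
    push_cast
    ring
  rw [show 2 * ρ * (ρ ^ (2*(m:ℝ)-1) * (1-ρ^2)^(s-1))
      = 2 * ((ρ * ρ ^ (2*(m:ℝ)-1)) * (1-ρ^2)^(s-1)) from by ring, h3]
  ring

lemma integrableOn_mom_half {s : ℝ} (hs : 0 < s) (m : ℕ) :
    IntegrableOn (fun ρ : ℝ => (1 - ρ ^ 2) ^ (s - 1) * ρ ^ (2 * m)) (Ioo 0 1) := by
  have key := (integrableOn_image_iff_integrableOn_abs_deriv_smul measurableSet_Ioo
    sq_hasDeriv sq_injOn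
    (fun x : ℝ => x ^ ((m:ℝ) - 1/2) * (1 - x) ^ (s - 1))).mp
  rw [sq_image_Ioo] at key
  have hb : IntegrableOn (fun x : ℝ => x ^ (((m:ℝ) + 1/2) - 1) * (1 - x) ^ (s - 1))
      (Ioo 0 1) := integrableOn_beta (by positivity) hs
  have hb' : IntegrableOn (fun x : ℝ => x ^ ((m:ℝ) - 1/2) * (1 - x) ^ (s - 1))
      (Ioo 0 1) := by
    convert hb using 3
    ring_nf
  have h2 := key hb'
  have h3 := (integrableOn_congr_fun (smul_eqOn (s := s) m) measurableSet_Ioo).mp h2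
  have h4 := h3.const_mul (1/2 : ℝ)
  refine (integrableOn_congr_fun (fun x _ => ?_) measurableSet_Ioo).mp h4
  show (1:ℝ)/2 * _ = _
  ring

lemma integral_mom_half {s : ℝ} (hs : 0 < s) (m : ℕ) :
    ∫ ρ in Ioo (0:ℝ) 1, (1 - ρ ^ 2) ^ (s - 1) * ρ ^ (2 * m)
      = betaFn ((m:ℝ) + 1/2) s / 2 := by
  have key := integral_image_eq_integral_abs_deriv_smul measurableSet_Ioo
    sq_hasDeriv sq_injOn (fun x : ℝ => x ^ ((m:ℝ) - 1/2) * (1 - x) ^ (s - 1))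
  rw [sq_image_Ioo] at key
  have hb : ∫ x in Ioo (0:ℝ) 1, x ^ ((m:ℝ) - 1/2) * (1 - x) ^ (s - 1)
      = betaFn ((m:ℝ) + 1/2) s := by
    rw [show ((m:ℝ) - 1/2) = ((m:ℝ) + 1/2) - 1 from by ring]
    exact integral_betaFn (by positivity) hs
  rw [key, setIntegral_congr_fun measurableSet_Ioo (smul_eqOn (s := s) m)] at hb
  rw [MeasureTheory.integral_const_mul] at hb
  linarith

lemma neg_image_Ioo : (fun ρ : ℝ => -ρ) '' Ioo 0 1 = Ioo (-1:ℝ) 0 := by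
  ext x
  constructor
  · rintro ⟨ρ, ⟨h0, h1⟩, rfl⟩; constructor <;> simp <;> linarith
  · rintro ⟨h0, h1⟩; exact ⟨-x, ⟨by linarith, by linarith⟩, by ring⟩

lemma neg_hasDeriv : ∀ ρ ∈ Ioo (0:ℝ) 1,
    HasDerivWithinAt (fun ρ : ℝ => -ρ) (-1) (Ioo 0 1) ρ := fun ρ _ =>
  (hasDerivAt_neg ρ).hasDerivWithinAt

lemma neg_injOn : InjOn (fun ρ : ℝ => -ρ) (Ioo 0 1) := fun a _ b _ h => by
  simpa using h

/-- Integral over the negative half equals the integral of `g ∘ neg` over the positive half. -/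
lemma integral_neg_half (g : ℝ → ℝ) :
    ∫ ρ in Ioo (-1:ℝ) 0, g ρ = ∫ ρ in Ioo (0:ℝ) 1, g (-ρ) := by
  have key := integral_image_eq_integral_abs_deriv_smul measurableSet_Ioo
    neg_hasDeriv neg_injOn g
  rw [neg_image_Ioo] at key
  rw [key]
  simp

lemma integrableOn_neg_half {g : ℝ → ℝ} (hg : IntegrableOn (fun ρ => g (-ρ)) (Ioo 0 1)) :
    IntegrableOn g (Ioo (-1:ℝ) 0) := by
  have key := (integrableOn_image_iff_integrableOn_abs_deriv_smul measurableSet_Ioo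
    neg_hasDeriv neg_injOn g)
  rw [neg_image_Ioo] at key
  refine key.mpr ?_
  simpa using hg

lemma integrableOn_mom {s : ℝ} (hs : 0 < s) (k : ℕ) :
    IntegrableOn (fun ρ : ℝ => (1 - ρ ^ 2) ^ (s - 1) * ρ ^ k) (Ioo (-1:ℝ) 1) := by
  have base : ∀ j : ℕ, IntegrableOn (fun ρ : ℝ => (1 - ρ ^ 2) ^ (s - 1) * ρ ^ j)
      (Ioo (0:ℝ) 1) := by
    intro j
    rcases Nat.even_or_odd j with ⟨m, rfl⟩ | ⟨m, rfl⟩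
    · exact (by simpa [two_mul] using integrableOn_mom_half hs m)
    · refine (integrableOn_mom_half hs m).mono' ?_ ?_
      · exact (Measurable.aestronglyMeasurable (by measurability))
      · filter_upwards [ae_restrict_mem measurableSet_Ioo] with ρ ⟨h0, h1⟩
        have hw : (0:ℝ) ≤ (1 - ρ ^ 2) ^ (s - 1) := by
          apply Real.rpow_nonneg; nlinarith
        rw [Real.norm_eq_abs, abs_mul, abs_of_nonneg hw, abs_pow, abs_of_pos h0]
        have : ρ ^ (2 * m + 1) ≤ ρ ^ (2 * m) :=
          pow_le_pow_of_le_one h0.le h1.le (by omega)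
        nlinarith [pow_nonneg h0.le (2*m)]
  have hneg : IntegrableOn (fun ρ : ℝ => (1 - ρ ^ 2) ^ (s - 1) * ρ ^ k)
      (Ioo (-1:ℝ) 0) := by
    apply integrableOn_neg_half
    refine (integrableOn_congr_fun (fun x _ => ?_) measurableSet_Ioo).mp
      ((base k).const_mul ((-1:ℝ)^k))
    show ((-1:ℝ))^k * ((1 - x ^ 2) ^ (s - 1) * x ^ k) = (1 - (-x) ^ 2) ^ (s - 1) * (-x) ^ k
    rw [neg_pow, neg_sq]
    ring
  have hsplit : Ioo (-1:ℝ) 1 = Ioo (-1) 0 ∪ Ico 0 1 := by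
    rw [Ioo_union_Ico_eq_Ioo (by norm_num) (by norm_num)]
  rw [hsplit]
  refine hneg.union ?_
  rw [IntegrableOn, Measure.restrict_congr_set Ioo_ae_eq_Ico.symm]
  exact base k

lemma integral_mom_even {s : ℝ} (hs : 0 < s) (m : ℕ) :
    ∫ ρ in Ioo (-1:ℝ) 1, (1 - ρ ^ 2) ^ (s - 1) * ρ ^ (2 * m)
      = betaFn ((m:ℝ) + 1/2) s := by
  have hsplit : Ioo (-1:ℝ) 1 = Ioo (-1) 0 ∪ Ico 0 1 := by
    rw [Ioo_union_Ico_eq_Ioo (by norm_num) (by norm_num)]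
  have hmom := integrableOn_mom hs (2*m)
  rw [hsplit] at hmom ⊢
  rw [setIntegral_union (by rw [Set.disjoint_left]; rintro a ⟨_, h0⟩ ⟨h1, _⟩; linarith)
    measurableSet_Ico
    (hmom.mono_set subset_union_left) (hmom.mono_set subset_union_right)]
  rw [setIntegral_congr_set Ioo_ae_eq_Ico.symm, integral_neg_half]
  have heq : ∀ ρ : ℝ, (1 - (-ρ) ^ 2) ^ (s - 1) * (-ρ) ^ (2*m)
      = (1 - ρ ^ 2) ^ (s - 1) * ρ ^ (2*m) := by
    intro ρ; rw [neg_sq, pow_mul, pow_mul, neg_sq]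
  simp only [heq]
  rw [integral_mom_half hs m]
  ring

lemma integral_mom_odd {s : ℝ} (hs : 0 < s) (m : ℕ) :
    ∫ ρ in Ioo (-1:ℝ) 1, (1 - ρ ^ 2) ^ (s - 1) * ρ ^ (2 * m + 1) = 0 := by
  have hsplit : Ioo (-1:ℝ) 1 = Ioo (-1) 0 ∪ Ico 0 1 := by
    rw [Ioo_union_Ico_eq_Ioo (by norm_num) (by norm_num)]
  have hmom := integrableOn_mom hs (2*m+1)
  rw [hsplit] at hmom ⊢
  rw [setIntegral_union (by rw [Set.disjoint_left]; rintro a ⟨_, h0⟩ ⟨h1, _⟩; linarith)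
    measurableSet_Ico
    (hmom.mono_set subset_union_left) (hmom.mono_set subset_union_right)]
  rw [setIntegral_congr_set Ioo_ae_eq_Ico.symm, integral_neg_half]
  have heq : ∀ ρ : ℝ, (1 - (-ρ) ^ 2) ^ (s - 1) * (-ρ) ^ (2*m+1)
      = -((1 - ρ ^ 2) ^ (s - 1) * ρ ^ (2*m+1)) := by
    intro ρ
    rw [neg_sq, Odd.neg_pow ⟨m, by ring⟩]
    ring
  simp only [heq]
  rw [integral_neg]
  ring

open Filter in
lemma tendsto_ratio_aux (a b : ℝ) :
    Tendsto (fun m : ℕ => ((m:ℝ) + a)/((m:ℝ) + b)) atTop (nhds 1) := by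
  have hb : Tendsto (fun m : ℕ => (m:ℝ) + b) atTop atTop :=
    tendsto_atTop_add_const_right _ b tendsto_natCast_atTop_atTop
  have h0 : Tendsto (fun m : ℕ => (a - b) * ((m:ℝ) + b)⁻¹) atTop (nhds 0) := by
    simpa using (hb.inv_tendsto_atTop).const_mul (a - b)
  have h1 : Tendsto (fun m : ℕ => 1 + (a - b) * ((m:ℝ) + b)⁻¹) atTop (nhds 1) := by
    simpa using h0.const_add 1
  refine h1.congr' ?_
  filter_upwards [hb.eventually_gt_atTop 0] with m hm
  field_simp
  ring

open Filter in
lemma summable_poch_ratio {p q c t : ℝ} (hp : 0 < p) (hq : 0 < q) (hc : 0 < c)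
    (ht0 : 0 ≤ t) (ht1 : t < 1) :
    Summable (fun m : ℕ => poch p m * poch q m / (poch c m * m.factorial) * t ^ m) := by
  rcases eq_or_lt_of_le ht0 with rfl | htpos
  · refine summable_of_ne_finset_zero (s := {0}) fun m hm => ?_
    have : m ≠ 0 := by simpa using hm
    simp [zero_pow this]
  have hpos : ∀ m : ℕ, 0 < poch p m * poch q m / (poch c m * m.factorial) * t ^ m := by
    intro m
    have := poch_pos hp m
    have := poch_pos hq m
    have := poch_pos hc m
    have : (0:ℝ) < m.factorial := by exact_mod_cast m.factorial_pos
    positivity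
  refine summable_of_ratio_test_tendsto_lt_one ht1 (Eventually.of_forall fun m => (hpos m).ne') ?_
  have key : Tendsto (fun m : ℕ => (((m:ℝ)+p)/((m:ℝ)+1)) * (((m:ℝ)+q)/((m:ℝ)+c)) * t)
      atTop (nhds t) := by
    simpa using (((tendsto_ratio_aux p 1).mul (tendsto_ratio_aux q c)).mul_const t)
  refine key.congr fun m => ?_
  have hfac : (0:ℝ) < m.factorial := by exact_mod_cast m.factorial_pos
  have h1 := poch_pos hp m
  have h2 := poch_pos hq m
  have h3 := poch_pos hc m
  have h4 : (0:ℝ) < (m:ℝ) + 1 := by positivity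
  have h5 : (0:ℝ) < (m:ℝ) + c := by positivity
  rw [Real.norm_eq_abs, Real.norm_eq_abs, abs_of_pos (hpos (m+1)), abs_of_pos (hpos m)]
  rw [poch_succ, poch_succ, poch_succ, Nat.factorial_succ, pow_succ]
  push_cast
  field_simp
  ring

lemma summable_abs_poch {a b c t : ℝ} (hc : 0 < c) (ht0 : 0 ≤ t) (ht1 : t < 1) :
    Summable (fun m : ℕ => |poch a m * poch b m| / (poch c m * m.factorial) * t ^ m) := by
  refine Summable.of_nonneg_of_le (fun m => ?_) (fun m => ?_)
    (summable_poch_ratio (p := |a| + 1) (q := |b| + 1) (by positivity) (by positivity)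
      hc ht0 ht1)
  · have := poch_pos hc m
    have : (0:ℝ) < m.factorial := by exact_mod_cast m.factorial_pos
    positivity
  · have h3 := poch_pos hc m
    have hfac : (0:ℝ) < m.factorial := by exact_mod_cast m.factorial_pos
    gcongr
    rw [abs_mul]
    exact mul_le_mul (abs_poch_le a m) (abs_poch_le b m) (abs_nonneg _)
      (poch_pos (by positivity) m).le

lemma summable_poch_signed {a b c t : ℝ} (hc : 0 < c) (ht : |t| < 1) :
    Summable (fun m : ℕ => poch a m * poch b m / (poch c m * m.factorial) * t ^ m) := by
  refine Summable.of_abs ?_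
  refine (summable_abs_poch (a := a) (b := b) hc (abs_nonneg t) ht).congr fun m => ?_
  have h3 := poch_pos hc m
  have hfac : (0:ℝ) < m.factorial := by exact_mod_cast m.factorial_pos
  symm
  rw [abs_mul, abs_pow, abs_div, abs_of_pos (show (0:ℝ) < poch c m * m.factorial by positivity)]

lemma tsum_H_eq (a b p q W s r ρ : ℝ) (hρ : ρ ∈ Ioo (-1:ℝ) 1) (hr : |r| < 1) :
    ∑' m : ℕ, (poch a m * poch b m / (poch (1/2) m * (m.factorial : ℝ)) * (r^2)^m *
        ((1-ρ^2)^(s-1) * ρ^(2*m))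
      + 2*r*W * (poch p m * poch q m / (poch (3/2) m * (m.factorial : ℝ)) * (r^2)^m) *
        ((1-ρ^2)^(s-1) * ρ^(2*m+1)))
    = (1-ρ^2)^(s-1) * (twoF1 a b (1/2) (r^2*ρ^2) + 2*r*ρ*W * twoF1 p q (3/2) (r^2*ρ^2)) := by
  obtain ⟨h1, h2⟩ := hρ
  have hz : |r^2*ρ^2| < 1 := by
    have h := abs_lt.mp hr
    have hr2 : r^2 < 1 := by nlinarith
    have hρ2 : ρ^2 < 1 := by nlinarith
    rw [abs_of_nonneg (by positivity)]
    calc r^2*ρ^2 ≤ 1*ρ^2 := mul_le_mul_of_nonneg_right hr2.le (sq_nonneg ρ)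
      _ = ρ^2 := one_mul _
      _ < 1 := hρ2
  have hs1 : Summable (fun m : ℕ =>
      (1-ρ^2)^(s-1) * (poch a m * poch b m / (poch (1/2) m * (m.factorial : ℝ)) *
        (r^2*ρ^2)^m)) :=
    (summable_poch_signed (by norm_num) hz).mul_left _
  have hs2 : Summable (fun m : ℕ =>
      ((1-ρ^2)^(s-1) * (2*r*ρ*W)) * (poch p m * poch q m /
        (poch (3/2) m * (m.factorial : ℝ)) * (r^2*ρ^2)^m)) :=
    (summable_poch_signed (by norm_num) hz).mul_left _
  have step : ∀ m : ℕ,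
      (poch a m * poch b m / (poch (1/2) m * (m.factorial : ℝ)) * (r^2)^m *
        ((1-ρ^2)^(s-1) * ρ^(2*m))
      + 2*r*W * (poch p m * poch q m / (poch (3/2) m * (m.factorial : ℝ)) * (r^2)^m) *
        ((1-ρ^2)^(s-1) * ρ^(2*m+1)))
      = (1-ρ^2)^(s-1) * (poch a m * poch b m / (poch (1/2) m * (m.factorial : ℝ)) *
          (r^2*ρ^2)^m)
        + ((1-ρ^2)^(s-1) * (2*r*ρ*W)) * (poch p m * poch q m /
          (poch (3/2) m * (m.factorial : ℝ)) * (r^2*ρ^2)^m) := by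
    intro m
    have hzpow : (r^2*ρ^2)^m = (r^2)^m * ρ^(2*m) := by rw [mul_pow, pow_mul]
    have hzpow1 : ρ^(2*m+1) = ρ^(2*m)*ρ := pow_succ ρ (2*m)
    simp only [hzpow, hzpow1]
    ring
  rw [tsum_congr step, Summable.tsum_add hs1 hs2, tsum_mul_left, tsum_mul_left]
  rw [twoF1, twoF1]
  ring

lemma main_general (a b p q W s r : ℝ) (hs : 0 < s) (hr : |r| < 1) :
    (∫ ρ in Ioo (-1:ℝ) 1, (1 - ρ ^ 2) ^ (s - 1) *
        (twoF1 a b (1/2) (r ^ 2 * ρ ^ 2) + 2 * r * ρ * W * twoF1 p q (3/2) (r ^ 2 * ρ ^ 2))) =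
    betaFn (1/2) s * twoF1 a b (1/2 + s) (r ^ 2) := by
  have ht0 : (0:ℝ) ≤ r^2 := by positivity
  have ht1 : r^2 < 1 := by
    have := abs_lt.mp hr; nlinarith
  set A : ℕ → ℝ := fun m =>
    poch a m * poch b m / (poch (1/2) m * (m.factorial : ℝ)) * (r^2)^m with hA
  set B : ℕ → ℝ := fun m =>
    2*r*W * (poch p m * poch q m / (poch (3/2) m * (m.factorial : ℝ)) * (r^2)^m) with hB
  set H : ℕ → ℝ → ℝ := fun m ρ =>
    A m * ((1-ρ^2)^(s-1) * ρ^(2*m)) + B m * ((1-ρ^2)^(s-1) * ρ^(2*m+1)) with hH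
  have hFint : ∀ m : ℕ, IntegrableOn
      (fun ρ : ℝ => A m * ((1-ρ^2)^(s-1) * ρ^(2*m))) (Ioo (-1:ℝ) 1) :=
    fun m => (integrableOn_mom hs (2*m)).const_mul (A m)
  have hGint : ∀ m : ℕ, IntegrableOn
      (fun ρ : ℝ => B m * ((1-ρ^2)^(s-1) * ρ^(2*m+1))) (Ioo (-1:ℝ) 1) :=
    fun m => (integrableOn_mom hs (2*m+1)).const_mul (B m)
  have hHint : ∀ m : ℕ, IntegrableOn (fun ρ => H m ρ) (Ioo (-1:ℝ) 1) :=
    fun m => (hFint m).add (hGint m)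
  -- nonnegativity of the weight on the interval
  have hwpos : ∀ ρ ∈ Ioo (-1:ℝ) 1, (0:ℝ) ≤ (1-ρ^2)^(s-1) := by
    intro ρ ⟨u1, u2⟩
    apply Real.rpow_nonneg
    nlinarith
  -- bound for ∫‖H m‖
  have hbound : ∀ m : ℕ, (∫ ρ in Ioo (-1:ℝ) 1, ‖H m ρ‖)
      ≤ (|A m| + |B m|) * betaFn ((m:ℝ) + 1/2) s := by
    intro m
    have hmono : ∀ ρ ∈ Ioo (-1:ℝ) 1,
        ‖H m ρ‖ ≤ (|A m| + |B m|) * ((1-ρ^2)^(s-1) * ρ^(2*m)) := by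
      intro ρ hρm
      obtain ⟨u1, u2⟩ := hρm
      have hw := hwpos ρ ⟨u1, u2⟩
      have hρ1 : |ρ| ≤ 1 := by rw [abs_le]; constructor <;> linarith
      have hev : (0:ℝ) ≤ ρ^(2*m) := (even_two_mul m).pow_nonneg ρ
      have e1 : ‖A m * ((1-ρ^2)^(s-1) * ρ^(2*m))‖
          = |A m| * ((1-ρ^2)^(s-1) * ρ^(2*m)) := by
        rw [norm_mul, Real.norm_eq_abs (A m), Real.norm_eq_abs,
          abs_of_nonneg (mul_nonneg hw hev)]
      have e2 : ‖B m * ((1-ρ^2)^(s-1) * ρ^(2*m+1))‖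
          ≤ |B m| * ((1-ρ^2)^(s-1) * ρ^(2*m)) := by
        rw [norm_mul, Real.norm_eq_abs (B m), Real.norm_eq_abs]
        refine mul_le_mul_of_nonneg_left ?_ (abs_nonneg _)
        rw [abs_mul, abs_of_nonneg hw]
        refine mul_le_mul_of_nonneg_left ?_ hw
        rw [abs_pow]
        calc |ρ| ^ (2*m+1) ≤ |ρ| ^ (2*m) :=
              pow_le_pow_of_le_one (abs_nonneg _) hρ1 (by omega)
          _ = ρ ^ (2*m) := (even_two_mul m).pow_abs ρ
      calc ‖H m ρ‖ ≤ ‖A m * ((1-ρ^2)^(s-1) * ρ^(2*m))‖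
            + ‖B m * ((1-ρ^2)^(s-1) * ρ^(2*m+1))‖ := norm_add_le _ _
        _ ≤ |A m| * ((1-ρ^2)^(s-1) * ρ^(2*m))
            + |B m| * ((1-ρ^2)^(s-1) * ρ^(2*m)) := by
              exact add_le_add (le_of_eq e1) e2
        _ = (|A m| + |B m|) * ((1-ρ^2)^(s-1) * ρ^(2*m)) := by ring
    calc (∫ ρ in Ioo (-1:ℝ) 1, ‖H m ρ‖)
        ≤ ∫ ρ in Ioo (-1:ℝ) 1, (|A m| + |B m|) * ((1-ρ^2)^(s-1) * ρ^(2*m)) := by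
          refine setIntegral_mono_on (hHint m).norm
            ((integrableOn_mom hs (2*m)).const_mul _) measurableSet_Ioo hmono
      _ = (|A m| + |B m|) * betaFn ((m:ℝ) + 1/2) s := by
          rw [MeasureTheory.integral_const_mul, integral_mom_even hs m]
  have hbeta_le : ∀ m : ℕ, betaFn ((m:ℝ) + 1/2) s ≤ betaFn (1/2) s := by
    intro m
    rw [betaFn_poch hs m]
    have h1 := poch_pos (show (0:ℝ) < 1/2 by norm_num) m
    have h2 := poch_pos (show (0:ℝ) < 1/2 + s by linarith) m
    have h3 := betaFn_pos (show (0:ℝ) < 1/2 by norm_num) hs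
    calc betaFn (1/2) s * (poch (1/2) m / poch (1/2+s) m)
        ≤ betaFn (1/2) s * 1 := by
          refine mul_le_mul_of_nonneg_left ?_ h3.le
          rw [div_le_one h2]
          exact poch_le_poch (by norm_num) (by linarith) m
      _ = betaFn (1/2) s := mul_one _
  have hbetapos : ∀ m : ℕ, 0 < betaFn ((m:ℝ) + 1/2) s :=
    fun m => betaFn_pos (by positivity) hs
  -- summability of the coefficient bounds
  have hsumA : Summable (fun m : ℕ => |A m|) := by
    refine (summable_abs_poch (a := a) (b := b) (show (0:ℝ) < 1/2 by norm_num)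
      ht0 ht1).congr fun m => ?_
    have h1 := poch_pos (show (0:ℝ) < 1/2 by norm_num) m
    have hfac : (0:ℝ) < m.factorial := by exact_mod_cast m.factorial_pos
    rw [hA]
    symm
    rw [abs_mul _ ((r^2:ℝ)^m), abs_div,
      abs_of_pos (by positivity : (0:ℝ) < poch (1/2) m * (m.factorial:ℝ)),
      abs_pow, abs_of_nonneg ht0]
  have hsumB : Summable (fun m : ℕ => |B m|) := by
    refine (((summable_abs_poch (a := p) (b := q) (show (0:ℝ) < 3/2 by norm_num)
      ht0 ht1)).mul_left |2*r*W|).congr fun m => ?_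
    have h1 := poch_pos (show (0:ℝ) < 3/2 by norm_num) m
    have hfac : (0:ℝ) < m.factorial := by exact_mod_cast m.factorial_pos
    rw [hB]
    symm
    rw [abs_mul (2*r*W), abs_mul _ ((r^2:ℝ)^m), abs_div,
      abs_of_pos (by positivity : (0:ℝ) < poch (3/2) m * (m.factorial:ℝ)),
      abs_pow, abs_of_nonneg ht0]
  have hsum : Summable (fun m : ℕ => ∫ ρ in Ioo (-1:ℝ) 1, ‖H m ρ‖) := by
    refine Summable.of_nonneg_of_le
      (fun m => integral_nonneg fun ρ => norm_nonneg _)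
      (fun m => (hbound m).trans ?_)
      (((hsumA.add hsumB).mul_right (betaFn (1/2) s)))
    refine mul_le_mul_of_nonneg_left (hbeta_le m) ?_
    positivity
  have key := MeasureTheory.integral_tsum_of_summable_integral_norm
    (μ := volume.restrict (Ioo (-1:ℝ) 1)) (F := H) hHint hsum
  -- compute each ∫ H m
  have hint_m : ∀ m : ℕ, (∫ ρ in Ioo (-1:ℝ) 1, H m ρ)
      = A m * betaFn ((m:ℝ) + 1/2) s := by
    intro m
    rw [hH]
    simp only
    rw [integral_add (hFint m) (hGint m), MeasureTheory.integral_const_mul,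
      MeasureTheory.integral_const_mul, integral_mom_even hs m, integral_mom_odd hs m]
    ring
  -- identify the integral of the tsum with the original integrand
  have hcongr : (∫ ρ in Ioo (-1:ℝ) 1, ∑' m : ℕ, H m ρ)
      = ∫ ρ in Ioo (-1:ℝ) 1, (1 - ρ ^ 2) ^ (s - 1) *
        (twoF1 a b (1/2) (r ^ 2 * ρ ^ 2) + 2 * r * ρ * W * twoF1 p q (3/2) (r ^ 2 * ρ ^ 2)) := by
    refine setIntegral_congr_fun measurableSet_Ioo fun ρ hρm => ?_
    exact tsum_H_eq a b p q W s r ρ hρm hr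
  rw [hcongr] at key
  rw [← key]
  -- finally evaluate the series
  rw [tsum_congr hint_m]
  have final : ∀ m : ℕ, A m * betaFn ((m:ℝ) + 1/2) s
      = betaFn (1/2) s * (poch a m * poch b m /
          (poch (1/2 + s) m * (m.factorial : ℝ)) * (r^2)^m) := by
    intro m
    have h1 := poch_pos (show (0:ℝ) < 1/2 by norm_num) m
    have h2 := poch_pos (show (0:ℝ) < 1/2 + s by linarith) m
    have hfac : (0:ℝ) < m.factorial := by exact_mod_cast m.factorial_pos
    have key2 : poch a m * poch b m / (poch (1/2) m * (m.factorial:ℝ))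
        * (poch (1/2) m / poch (1/2+s) m)
        = poch a m * poch b m / (poch (1/2+s) m * (m.factorial:ℝ)) := by
      rw [div_mul_div_comm]
      rw [div_eq_div_iff (by positivity) (by positivity)]
      ring
    rw [betaFn_poch hs m, hA, ← key2]
    ring
  rw [tsum_congr final, tsum_mul_left, twoF1]

/-- Corollary 2 (`β = 0`): the normalizing constant of the marginal posterior of `ρ`. -/
theorem posterior_normalizing_constant (n : ℕ) (hn : 1 ≤ n) (α γ δ : ℝ) (hα : 0 < α)
    (hcond : γ + δ - 2 * α + 1 < (n : ℝ)) (r : ℝ) (hr : r ∈ Ioo (-1 : ℝ) 1) :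
    (∫ ρ in Ioo (-1 : ℝ) 1,
        (1 - ρ ^ 2) ^ ((2 * α + (n : ℝ) - γ - δ - 3) / 2) *
          (twoF1 (((n : ℝ) - γ - 1) / 2) (((n : ℝ) - δ - 1) / 2) (1 / 2) (r ^ 2 * ρ ^ 2) +
            2 * r * ρ * Wgd γ δ n *
              twoF1 (((n : ℝ) - γ) / 2) (((n : ℝ) - δ) / 2) (3 / 2) (r ^ 2 * ρ ^ 2))) =
      betaFn (1 / 2) (α + ((n : ℝ) - γ - δ - 1) / 2) *
        twoF1 (((n : ℝ) - γ - 1) / 2) (((n : ℝ) - δ - 1) / 2)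
          (α + ((n : ℝ) - γ - δ) / 2) (r ^ 2) := by
  obtain ⟨hr1, hr2⟩ := hr
  have habs : |r| < 1 := abs_lt.mpr ⟨hr1, hr2⟩
  have hs : 0 < α + ((n:ℝ) - γ - δ - 1)/2 := by linarith
  have h1 : (2 * α + (n:ℝ) - γ - δ - 3)/2 = (α + ((n:ℝ) - γ - δ - 1)/2) - 1 := by ring
  have h2 : α + ((n:ℝ) - γ - δ)/2 = 1/2 + (α + ((n:ℝ) - γ - δ - 1)/2) := by ring
  rw [h1, h2]
  exact main_general _ _ _ _ _ _ r hs habs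
end
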